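/- The eval-readback evaluator byValue is big-step equivalent to the balanced hybrid evaluator strict normalisation: for all terms M and N, sn(M) = N if and only if there exists a term P with bv(M) = P and bodies(P) = N; i.e., as big-step relations, bodies ∘ bv = sn. -/
import Mathlib


/-- Pure λ-calculus terms (de Bruijn representation). -/
inductive Tm : Type
  | var : Nat → Tm
  | lam : Tm → Tm
  | app : Tm → Tm → Tm
deriving DecidableEq

/-- Shift the free variables (those ≥ `c`) of a term up by one. -/
def lift (c : Nat) : Tm → Tm
  | .var n => if n < c then .var n else .var (n + 1)
  | .lam b => .lam (lift (c + 1) b)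
  | .app m n => .app (lift c m) (lift c n)

/-- Capture-avoiding substitution `[N/k]B` (de Bruijn). -/
def subst (N : Tm) (k : Nat) : Tm → Tm
  | .var n => if n < k then .var n else if n = k then N else .var (n - 1)
  | .lam b => .lam (subst (lift 0 N) (k + 1) b)
  | .app m n => .app (subst N k m) (subst N k n)
/-- Composition of big-step relations: `(Comp s2 s1) M N` iff
    there is `P` with `s1 M P` and `s2 P N`. -/
def Comp (s2 s1 : Tm → Tm → Prop) : Tm → Tm → Prop :=
  fun M N => ∃ P, s1 M P ∧ s2 P N

/-- The term `Ω = (λx.x x)(λx.x x)`. -/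
def Omega : Tm :=
  .app (.lam (.app (.var 0) (.var 0))) (.lam (.app (.var 0) (.var 0)))
/-- Call-by-value big-step relation. -/
inductive Bv : Tm → Tm → Prop
  | var : ∀ n, Bv (.var n) (.var n)
  | lam : ∀ B, Bv (.lam B) (.lam B)
  | beta : ∀ M N B N' B', Bv M (.lam B) → Bv N N' → Bv (subst N' 0 B) B' →
      Bv (.app M N) B'
  | neu : ∀ M N M' N', Bv M M' → (∀ B, M' ≠ .lam B) → Bv N N' →
      Bv (.app M N) (.app M' N')

/-- Strict normalisation big-step relation (with call-by-value as subsidiary). -/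
inductive Sn : Tm → Tm → Prop
  | var : ∀ n, Sn (.var n) (.var n)
  | lam : ∀ B B', Sn B B' → Sn (.lam B) (.lam B')
  | beta : ∀ M N B N' B', Bv M (.lam B) → Bv N N' → Sn (subst N' 0 B) B' →
      Sn (.app M N) B'
  | neu : ∀ M N M' M'' N', Bv M M' → (∀ B, M' ≠ .lam B) → Sn M' M'' → Sn N N' →
      Sn (.app M N) (.app M'' N')

/-- The readback `bodies` of the eval-readback evaluator byValue. -/
inductive Bodies : Tm → Tm → Prop
  | var : ∀ n, Bodies (.var n) (.var n)
  | lam : ∀ B P B'', Bv B P → Bodies P B'' → Bodies (.lam B) (.lam B'')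
  | app : ∀ M N M' N', Bodies M M' → Bodies N N' →
      Bodies (.app M N) (.app M' N')

theorem bv_det : ∀ {M P Q : Tm}, Bv M P → Bv M Q → P = Q := by
  intro M P Q h
  induction h generalizing Q with
  | var n => intro h2; cases h2; rfl
  | lam B => intro h2; cases h2; rfl
  | beta M N B N' B' hM hN hB ihM ihN ihB =>
    intro h2
    cases h2 with
    | beta M N B2 N2 B2' hM2 hN2 hB2 =>
      have e := ihM hM2; injection e with e; subst e
      have e := ihN hN2; subst e
      exact ihB hB2
    | neu M N M2 N2 hM2 hne hN2 =>
      exact absurd (ihM hM2).symm (hne B)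
  | neu M N M' N' hM hne hN ihM ihN =>
    intro h2
    cases h2 with
    | beta M N B2 N2 B2' hM2 hN2 hB2 =>
      exact absurd (ihM hM2) (hne B2)
    | neu M N M2 N2 hM2 hne2 hN2 =>
      rw [ihM hM2, ihN hN2]

theorem bv_val : ∀ {M P : Tm}, Bv M P → Bv P P := by
  intro M P h
  induction h with
  | var n => exact Bv.var n
  | lam B => exact Bv.lam B
  | beta _ _ _ _ _ _ _ _ _ _ ih => exact ih
  | neu M N M' N' hM hne hN ihM ihN => exact Bv.neu _ _ _ _ ihM hne ihN

/-- Structural characterisation of call-by-value results. -/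
inductive Nv : Tm → Prop
  | var : ∀ n, Nv (.var n)
  | lam : ∀ B, Nv (.lam B)
  | app : ∀ M N, Nv M → (∀ B, M ≠ .lam B) → Nv N → Nv (.app M N)

theorem bv_nv : ∀ {M P : Tm}, Bv M P → Nv P := by
  intro M P h
  induction h with
  | var n => exact Nv.var n
  | lam B => exact Nv.lam B
  | beta _ _ _ _ _ _ _ _ _ _ ih => exact ih
  | neu M N M' N' hM hne hN ihM ihN => exact Nv.app _ _ ihM hne ihN

theorem nv_bv : ∀ {P : Tm}, Nv P → Bv P P := by
  intro P h
  induction h with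
  | var n => exact Bv.var n
  | lam B => exact Bv.lam B
  | app M N _ hne _ ihM ihN => exact Bv.neu _ _ _ _ ihM hne ihN

theorem bv_sn : ∀ {M Q B'' : Tm}, Bv M Q → Sn Q B'' → Sn M B'' := by
  intro M Q B'' h
  induction h generalizing B'' with
  | var n => exact id
  | lam B => exact id
  | beta M N B N' B' hM hN hB ihM ihN ihB =>
    intro hs; exact Sn.beta _ _ _ _ _ hM hN (ihB hs)
  | neu M N M' N' hM hne hN ihM ihN =>
    intro hs
    cases hs with
    | beta _ _ B0 _ _ hM' hN' hB0 =>
      exact absurd (bv_det (bv_val hM) hM') (hne B0)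
    | neu _ _ M1 M'' N'' hM1 hne2 hM'' hN'' =>
      have e := bv_det (bv_val hM) hM1
      subst e
      exact Sn.neu _ _ _ _ _ hM hne hM'' (ihN hN'')

theorem bodies_sn : ∀ {P N : Tm}, Bodies P N → Nv P → Sn P N := by
  intro P N h
  induction h with
  | var n => intro _; exact Sn.var n
  | lam B Q B'' hB hb ih =>
    intro _
    exact Sn.lam _ _ (bv_sn hB (ih (bv_nv hB)))
  | app M N M' N' h1 h2 ih1 ih2 =>
    intro hnv
    cases hnv with
    | app _ _ hM hne hN =>
      exact Sn.neu _ _ _ _ _ (nv_bv hM) hne (ih1 hM) (ih2 hN)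

/-- byValue (= bodies ∘ bv) is big-step equivalent to strict normalisation. -/
theorem byValue_equiv_sn :
    (∀ M N : Tm, Sn M N ↔ ∃ P : Tm, Bv M P ∧ Bodies P N) ∧
    Comp Bodies Bv = Sn := by
  have main : ∀ M N : Tm, Sn M N ↔ ∃ P : Tm, Bv M P ∧ Bodies P N := by
    intro M N
    constructor
    · intro h
      induction h with
      | var n => exact ⟨.var n, Bv.var n, Bodies.var n⟩
      | lam B B' hB ih =>
        obtain ⟨P, hbv, hbo⟩ := ih
        exact ⟨.lam B, Bv.lam B, Bodies.lam _ _ _ hbv hbo⟩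
      | beta M N B N' B' hM hN hB ih =>
        obtain ⟨P, hbv, hbo⟩ := ih
        exact ⟨P, Bv.beta _ _ _ _ _ hM hN hbv, hbo⟩
      | neu M N M' M'' N' hM hne hM' hN ih1 ih2 =>
        obtain ⟨P1, hbv1, hbo1⟩ := ih1
        obtain ⟨P2, hbv2, hbo2⟩ := ih2
        have e := bv_det (bv_val hM) hbv1
        subst e
        exact ⟨.app M' P2, Bv.neu _ _ _ _ hM hne hbv2,
          Bodies.app _ _ _ _ hbo1 hbo2⟩
    · rintro ⟨P, hbv, hbo⟩
      exact bv_sn hbv (bodies_sn hbo (bv_nv hbv))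
  refine ⟨main, ?_⟩
  funext M N
  simp only [Comp, eq_iff_iff]
  exact (main M N).symm
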